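/- arXiv:2205.05761 — 2 statements merged into one kernel-verified Lean document; each statement's English description precedes it below -/
import Mathlib

section
/- Normalization lemma: given real coefficients (a₁,b₁,c₁;a₂,b₂,c₂) with c₁ < 0 and c₂ < 0, there exist λ' ∈ ℝ (imaginary-shear parameter) applied in each variable and r > 0 such that after applying the transformations Iλ (adding λ' to a₁ and to b₂ respectively via shears in each coordinate) and S_r, the coefficients satisfy a₁ = a₂ = 0 and c₁ = c₂ = −1; moreover this choice is unique up to the swap W exchanging the two coordinates. -/
/-- Normal-form coefficient tuple `((a₁, b₁, c₁), (a₂, b₂, c₂))`. -/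
abbrev NFTuple := (ℝ × ℝ × ℝ) × (ℝ × ℝ × ℝ)

/-- Shear in `z₁` by `iλ`: `(a₁+λ, b₁, c₁; a₂, b₂+λ, c₂)`. -/
def nfShear₁ (l : ℝ) (v : NFTuple) : NFTuple :=
  ((v.1.1 + l, v.1.2.1, v.1.2.2), (v.2.1, v.2.2.1 + l, v.2.2.2))

/-- Shear in `z₂` by `iμ` (the symmetric rule): `(a₁, b₁+μ, c₁; a₂+μ, b₂, c₂)`. -/
def nfShear₂ (m : ℝ) (v : NFTuple) : NFTuple :=
  ((v.1.1, v.1.2.1 + m, v.1.2.2), (v.2.1 + m, v.2.2.1, v.2.2.2))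

/-- Scaling in `z₁` by `r > 0`: `(a₁r, b₁, c₁/r; a₂, b₂r, c₂r²)`. -/
noncomputable def nfScale₁ (r : ℝ) (v : NFTuple) : NFTuple :=
  ((v.1.1 * r, v.1.2.1, v.1.2.2 / r), (v.2.1, v.2.2.1 * r, v.2.2.2 * r^2))

/-- Scaling in `z₂` by `s > 0` (the symmetric rule):
`(a₁, b₁s, c₁s²; a₂s, b₂, c₂/s)`. -/
noncomputable def nfScale₂ (s : ℝ) (v : NFTuple) : NFTuple :=
  ((v.1.1, v.1.2.1 * s, v.1.2.2 * s^2), (v.2.1 * s, v.2.2.1, v.2.2.2 / s))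

/-- The swap `W` exchanging the two coordinates. -/
def nfSwap (v : NFTuple) : NFTuple := (v.2, v.1)

/-- The normalized form: `a₁ = a₂ = 0` and `c₁ = c₂ = −1`. -/
def nfNormalized (v : NFTuple) : Prop :=
  v.1.1 = 0 ∧ v.2.1 = 0 ∧ v.1.2.2 = -1 ∧ v.2.2.2 = -1

private lemma cube_inj {x y : ℝ} (hx : 0 < x) (hy : 0 < y) (h : x^3 = y^3) : x = y := by
  nlinarith [sq_nonneg (x - y), sq_nonneg (x + y), mul_pos hx hy]

/-- Normalization lemma: if `c₁ < 0` and `c₂ < 0`, then there are shears and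
positive scalings bringing the tuple to the form `a₁ = a₂ = 0`,
`c₁ = c₂ = −1`; moreover the normalized tuple reached this way is unique up to
the swap `W`. -/
theorem stmt_11 (v : NFTuple) (hc₁ : v.1.2.2 < 0) (hc₂ : v.2.2.2 < 0) :
    (∃ l m r s : ℝ, 0 < r ∧ 0 < s ∧
      nfNormalized (nfScale₂ s (nfScale₁ r (nfShear₂ m (nfShear₁ l v))))) ∧
    (∀ l m r s l' m' r' s' : ℝ, 0 < r → 0 < s → 0 < r' → 0 < s' →
      nfNormalized (nfScale₂ s (nfScale₁ r (nfShear₂ m (nfShear₁ l v)))) →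
      nfNormalized (nfScale₂ s' (nfScale₁ r' (nfShear₂ m' (nfShear₁ l' v)))) →
      nfScale₂ s' (nfScale₁ r' (nfShear₂ m' (nfShear₁ l' v))) =
        nfScale₂ s (nfScale₁ r (nfShear₂ m (nfShear₁ l v))) ∨
      nfScale₂ s' (nfScale₁ r' (nfShear₂ m' (nfShear₁ l' v))) =
        nfSwap (nfScale₂ s (nfScale₁ r (nfShear₂ m (nfShear₁ l v))))) := by
  obtain ⟨⟨a₁, b₁, c₁⟩, a₂, b₂, c₂⟩ := v
  simp only at hc₁ hc₂
  have hc₁' : c₁ ≠ 0 := ne_of_lt hc₁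
  have hc₂' : c₂ ≠ 0 := ne_of_lt hc₂
  set A : ℝ := -1 / c₁ with hA_def
  set B : ℝ := -1 / c₂ with hB_def
  have hA : 0 < A := div_pos_iff.mpr (Or.inr ⟨by norm_num, hc₁⟩)
  have hB : 0 < B := div_pos_iff.mpr (Or.inr ⟨by norm_num, hc₂⟩)
  constructor
  · -- existence
    refine ⟨-a₁, -a₂, A ^ ((1:ℝ)/3) * B ^ ((2:ℝ)/3),
      A ^ ((2:ℝ)/3) * B ^ ((1:ℝ)/3), by positivity, by positivity, ?_⟩
    set r : ℝ := A ^ ((1:ℝ)/3) * B ^ ((2:ℝ)/3) with hr_def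
    set s : ℝ := A ^ ((2:ℝ)/3) * B ^ ((1:ℝ)/3) with hs_def
    have hr : 0 < r := by rw [hr_def]; positivity
    have hs : 0 < s := by rw [hs_def]; positivity
    have hr3 : r ^ 3 = A * B ^ 2 := by
      rw [hr_def, mul_pow, ← Real.rpow_natCast (A ^ ((1:ℝ)/3)) 3,
        ← Real.rpow_natCast (B ^ ((2:ℝ)/3)) 3,
        ← Real.rpow_mul hA.le, ← Real.rpow_mul hB.le]
      norm_num
    have hs3 : s ^ 3 = A ^ 2 * B := by
      rw [hs_def, mul_pow, ← Real.rpow_natCast (A ^ ((2:ℝ)/3)) 3,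
        ← Real.rpow_natCast (B ^ ((1:ℝ)/3)) 3,
        ← Real.rpow_mul hA.le, ← Real.rpow_mul hB.le]
      norm_num
    have hs2 : s ^ 2 = A * r := by
      refine cube_inj (by positivity) (by positivity) ?_
      calc (s ^ 2) ^ 3 = (s ^ 3) ^ 2 := by ring
        _ = (A ^ 2 * B) ^ 2 := by rw [hs3]
        _ = A ^ 3 * (A * B ^ 2) := by ring
        _ = A ^ 3 * r ^ 3 := by rw [hr3]
        _ = (A * r) ^ 3 := by ring
    have hr2 : r ^ 2 = B * s := by
      refine cube_inj (by positivity) (by positivity) ?_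
      calc (r ^ 2) ^ 3 = (r ^ 3) ^ 2 := by ring
        _ = (A * B ^ 2) ^ 2 := by rw [hr3]
        _ = B ^ 3 * (A ^ 2 * B) := by ring
        _ = B ^ 3 * s ^ 3 := by rw [hs3]
        _ = (B * s) ^ 3 := by ring
    refine ⟨by simp [nfScale₂, nfScale₁, nfShear₂, nfShear₁],
      by simp [nfScale₂, nfScale₁, nfShear₂, nfShear₁], ?_, ?_⟩
    · show c₁ / r * s ^ 2 = -1
      rw [hs2, hA_def]
      field_simp
    · show c₂ * r ^ 2 / s = -1
      rw [hr2, hB_def]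
      field_simp
  · -- uniqueness
    intro l m r s l' m' r' s' hr hs hr' hs' h1 h2
    left
    obtain ⟨e1a, e1b, e1c, e1d⟩ := h1
    obtain ⟨e2a, e2b, e2c, e2d⟩ := h2
    simp only [nfScale₂, nfScale₁, nfShear₂, nfShear₁] at e1a e1b e1c e1d e2a e2b e2c e2d ⊢
    -- shears are determined
    have hl : l = -a₁ := by
      have := mul_eq_zero.mp e1a
      rcases this with h | h
      · linarith
      · exact absurd h (ne_of_gt hr)
    have hl' : l' = -a₁ := by
      rcases mul_eq_zero.mp e2a with h | h
      · linarith
      · exact absurd h (ne_of_gt hr')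
    have hm : m = -a₂ := by
      rcases mul_eq_zero.mp e1b with h | h
      · linarith
      · exact absurd h (ne_of_gt hs)
    have hm' : m' = -a₂ := by
      rcases mul_eq_zero.mp e2b with h | h
      · linarith
      · exact absurd h (ne_of_gt hs')
    -- scalings are determined
    have E1 : c₁ * s ^ 2 = -r := by
      field_simp at e1c; linarith
    have E2 : c₂ * r ^ 2 = -s := by
      field_simp at e1d; linarith
    have E1' : c₁ * s' ^ 2 = -r' := by
      field_simp at e2c; linarith
    have E2' : c₂ * r' ^ 2 = -s' := by
      field_simp at e2d; linarith
    have hS : c₂ * c₁ ^ 2 * s ^ 4 = -s := by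
      linear_combination (c₂ * (c₁ * s ^ 2 - r)) * E1 + E2
    have hS' : c₂ * c₁ ^ 2 * s' ^ 4 = -s' := by
      linear_combination (c₂ * (c₁ * s' ^ 2 - r')) * E1' + E2'
    have hS3 : c₂ * c₁ ^ 2 * s ^ 3 = -1 :=
      mul_left_cancel₀ (ne_of_gt hs) (by linear_combination hS)
    have hS3' : c₂ * c₁ ^ 2 * s' ^ 3 = -1 :=
      mul_left_cancel₀ (ne_of_gt hs') (by linear_combination hS')
    have hss : s = s' := by
      refine cube_inj hs hs' ?_
      have hcc : c₂ * c₁ ^ 2 ≠ 0 := mul_ne_zero hc₂' (pow_ne_zero 2 hc₁')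
      exact mul_left_cancel₀ hcc (by rw [hS3, hS3'])
    have hR : c₁ * c₂ ^ 2 * r ^ 4 = -r := by
      linear_combination (c₁ * (c₂ * r ^ 2 - s)) * E2 + E1
    have hR' : c₁ * c₂ ^ 2 * r' ^ 4 = -r' := by
      linear_combination (c₁ * (c₂ * r' ^ 2 - s')) * E2' + E1'
    have hR3 : c₁ * c₂ ^ 2 * r ^ 3 = -1 :=
      mul_left_cancel₀ (ne_of_gt hr) (by linear_combination hR)
    have hR3' : c₁ * c₂ ^ 2 * r' ^ 3 = -1 :=
      mul_left_cancel₀ (ne_of_gt hr') (by linear_combination hR')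
    have hrr : r = r' := by
      refine cube_inj hr hr' ?_
      have hcc : c₁ * c₂ ^ 2 ≠ 0 := mul_ne_zero hc₁' (pow_ne_zero 2 hc₂')
      exact mul_left_cancel₀ hcc (by rw [hR3, hR3'])
    subst hl hl' hm hm' hss hrr
    rfl
end

section
/- For t, s > 0 with t + s = 1 and normal form y₁ ≤ b₁x₁x₂ − x₂² + o(‖x‖²), y₂ ≤ b₂x₁x₂ − x₁² + o(‖x‖²), if the invariant condition −t b₁ − s b₂ < (t³+s³)/(st) holds for all t ∈ (0,1), then along the line t x₁ + s x₂ = 0 (i.e., x₂ = −(t/s)x₁), the combination t y₁ + s y₂ is bounded above by a negative multiple of x₁² for small x₁ ≠ 0. -/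
/-- For `t ∈ (0,1)`, `s = 1−t`, along the line `x₂ = −(t/s)x₁` one has
`t(b₁x₁x₂ − x₂²) + s(b₂x₁x₂ − x₁²) = (−t³ − s³ − t²s b₁ − t s² b₂)·x₁²/s²`,
and if `−u b₁ − (1−u) b₂ < (u³+(1−u)³)/((1−u)u)` for all `u ∈ (0,1)`, then this
quantity is negative for `x₁ ≠ 0`. -/
theorem stmt_12 (b₁ b₂ t s x₁ x₂ : ℝ)
    (ht : t ∈ Set.Ioo (0:ℝ) 1) (hs : s = 1 - t)
    (hineq : ∀ u ∈ Set.Ioo (0:ℝ) 1,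
      -u * b₁ - (1 - u) * b₂ < (u^3 + (1 - u)^3) / ((1 - u) * u))
    (hx₁ : x₁ ≠ 0) (hx₂ : x₂ = -(t / s) * x₁) :
    t * (b₁ * x₁ * x₂ - x₂^2) + s * (b₂ * x₁ * x₂ - x₁^2) =
      (-t^3 - s^3 - t^2 * s * b₁ - t * s^2 * b₂) * x₁^2 / s^2 ∧
    t * (b₁ * x₁ * x₂ - x₂^2) + s * (b₂ * x₁ * x₂ - x₁^2) < 0 := by
  obtain ⟨ht0, ht1⟩ := ht
  have hs0 : 0 < s := by rw [hs]; linarith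
  have hsne : s ≠ 0 := ne_of_gt hs0
  have heq : t * (b₁ * x₁ * x₂ - x₂^2) + s * (b₂ * x₁ * x₂ - x₁^2) =
      (-t^3 - s^3 - t^2 * s * b₁ - t * s^2 * b₂) * x₁^2 / s^2 := by
    subst hx₂; field_simp; ring
  refine ⟨heq, ?_⟩
  rw [heq]
  have h := hineq t ⟨ht0, ht1⟩
  rw [← hs] at h
  have hst : 0 < s * t := mul_pos hs0 ht0
  have hnum : -t^3 - s^3 - t^2 * s * b₁ - t * s^2 * b₂ < 0 := by
    have h2 : (-t * b₁ - s * b₂) * (s * t) < t^3 + s^3 :=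
      (lt_div_iff₀ hst).mp h
    nlinarith [h2]
  have hx2 : 0 < x₁^2 := by positivity
  have hs2 : 0 < s^2 := by positivity
  have : (-t^3 - s^3 - t^2 * s * b₁ - t * s^2 * b₂) * x₁^2 < 0 :=
    mul_neg_of_neg_of_pos hnum hx2
  exact div_neg_of_neg_of_pos this hs2
end
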